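/- Let α, β, γ be complex numbers with (α+1)/2, (β+1)/2, γ+1 not non-positive integers. Define S(α,β,γ) = ∑_{n=0}^∞ (1/2)_n (γ+1)_n / (((α+1)/2)_{n+1} ((β+1)/2)_{n+1}), assumed to converge (e.g. when Re(2γ−α−β) < 1). Then α(α−2γ−1)·S(α,β,γ)/4 − (α−1)(α+β−2γ−1)·S(α−2,β,γ)/4 + 1 = 0, provided also (α−1)/2 is not a non-positive integer and both series converge. -/

import Mathlib

/-- Pochhammer symbol (rising factorial) `(a)_n = a(a+1)⋯(a+n-1)`. -/
noncomputable def poch (a : ℂ) (n : ℕ) : ℂ := (ascPochhammer ℂ n).eval a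

/-- The series `S(α,β,γ) = ∑_{n=0}^∞ (1/2)_n (γ+1)_n / ((α+1)/2)_{n+1} ((β+1)/2)_{n+1}`. -/
noncomputable def S (α β γ : ℂ) : ℂ :=
  ∑' n : ℕ, poch (1 / 2) n * poch (γ + 1) n /
    (poch ((α + 1) / 2) (n + 1) * poch ((β + 1) / 2) (n + 1))

/-!
With `a = (α+1)/2`, `b = (β+1)/2`, `c = 1/2`, `d = γ+1` the summand of `S` is
`T_n(a) = (c)_n (d)_n / ((a)_{n+1} (b)_{n+1})`. Both `T_n(a)` and `T_n(a-1)` are rational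
multiples of `W_n = (c)_n (d)_n / ((a)_n (b)_n)`, and the coefficients of the identity are exactly
those for which `(a-c)(a-d) T_n(a) - (a-1)(a+b-c-d) T_n(a-1) = W_{n+1} - W_n`. Summing gives
`lim W_n - 1`, and the limit vanishes: `W_n = (a-1)(b+n) T_n(a-1)`, so a nonzero limit would make
`T_n(a-1)` comparable to the harmonic series.
-/

open Filter Topology

lemma poch_succ (a : ℂ) (n : ℕ) : poch a (n + 1) = poch a n * (a + n) :=
  ascPochhammer_succ_eval n a

lemma poch_sub_one_succ (a : ℂ) (n : ℕ) : poch (a - 1) (n + 1) = (a - 1) * poch a n := by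
  simp [poch, ascPochhammer_succ_left, Polynomial.eval_comp]

lemma poch_ne_zero {a : ℂ} (ha : ∀ k : ℕ, a ≠ -k) (n : ℕ) : poch a n ≠ 0 := by
  simp only [poch, ne_eq, ascPochhammer_eval_eq_zero_iff, not_exists, not_and]
  exact fun k _ hk => ha k (by rw [hk, neg_neg])

lemma tendsto_of_hasSum_sub_succ {G : Type*} [AddCommGroup G] [TopologicalSpace G]
    [IsTopologicalAddGroup G] {w : ℕ → G} {s : G} (h : HasSum (fun n => w (n + 1) - w n) s) :
    Tendsto w atTop (𝓝 (s + w 0)) := by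
  simpa only [Finset.sum_range_sub, sub_add_cancel] using h.tendsto_sum_nat.add_const (w 0)

lemma not_summable_one_div_natCast_add_one : ¬ Summable (fun n : ℕ => 1 / ((n : ℝ) + 1)) := by
  exact_mod_cast mt (summable_nat_add_iff 1).1 Real.not_summable_one_div_natCast

lemma eq_zero_of_tendsto_add_natCast_mul {u : ℕ → ℂ} {b L : ℂ} (hu : Summable u)
    (h : Tendsto (fun n : ℕ => (b + n) * u n) atTop (𝓝 L)) : L = 0 := by
  by_contra hL
  have hL2 : 0 < ‖L‖ / 2 := by positivity
  have hlarge : ∀ᶠ n : ℕ in atTop, ‖L‖ / 2 < ‖(b + n) * u n‖ :=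
    h.norm.eventually (lt_mem_nhds (by linarith))
  refine not_summable_one_div_natCast_add_one <|
    hu.norm.mul_left ((‖b‖ + 1) / (‖L‖ / 2)) |>.of_norm_bounded_eventually_nat ?_
  filter_upwards [hlarge] with n hn
  have hgrowth : ‖(b + n) * u n‖ ≤ (‖b‖ + 1) * (n + 1) * ‖u n‖ := by
    rw [norm_mul]
    gcongr
    calc ‖b + n‖ ≤ ‖b‖ + n := by simpa using norm_add_le b (n : ℂ)
      _ ≤ (‖b‖ + 1) * (n + 1) := by nlinarith [norm_nonneg b, n.cast_nonneg (α := ℝ)]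
  rw [Real.norm_of_nonneg (by positivity)]
  calc 1 / ((n : ℝ) + 1) = (‖b‖ + 1) / (‖L‖ / 2) * (‖L‖ / 2 / ((‖b‖ + 1) * (n + 1))) := by
        field_simp
    _ ≤ (‖b‖ + 1) / (‖L‖ / 2) * ‖u n‖ := by
        gcongr
        rw [div_le_iff₀ (by positivity)]
        linarith

noncomputable def sTerm (c d a b : ℂ) (n : ℕ) : ℂ :=
  poch c n * poch d n / (poch a (n + 1) * poch b (n + 1))

noncomputable def pochQuot (c d a b : ℂ) (n : ℕ) : ℂ :=
  poch c n * poch d n / (poch a n * poch b n)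

section Contiguous

variable {a b c d : ℂ}

lemma pochQuot_zero : pochQuot c d a b 0 = 1 := by
  simp [pochQuot, poch]

lemma pochQuot_eq_add_natCast_mul_sTerm_sub_one (ha : a ≠ 1) {n : ℕ} (hb : b + n ≠ 0) :
    pochQuot c d a b n = (b + n) * ((a - 1) * sTerm c d (a - 1) b n) := by
  have ha' : a - 1 ≠ 0 := sub_ne_zero.2 ha
  rw [pochQuot, sTerm, poch_sub_one_succ, poch_succ b]
  field_simp

lemma sTerm_contiguous (ha : a ≠ 1) {n : ℕ} (hpa : poch a (n + 1) ≠ 0)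
    (hpb : poch b (n + 1) ≠ 0) :
    (a - c) * (a - d) * sTerm c d a b n - (a - 1) * (a + b - c - d) * sTerm c d (a - 1) b n =
      pochQuot c d a b (n + 1) - pochQuot c d a b n := by
  have ha' : a - 1 ≠ 0 := sub_ne_zero.2 ha
  rw [poch_succ] at hpa hpb
  obtain ⟨hpa, han⟩ := mul_ne_zero_iff.1 hpa
  obtain ⟨hpb, hbn⟩ := mul_ne_zero_iff.1 hpb
  simp only [sTerm, pochQuot]
  rw [poch_sub_one_succ]
  simp only [poch_succ]
  field_simp
  ring

theorem tsum_sTerm_contiguous (ha : ∀ k : ℕ, a ≠ -k) (ha1 : a ≠ 1)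
    (hb : ∀ k : ℕ, b ≠ -k) (h1 : Summable (sTerm c d a b))
    (h2 : Summable (sTerm c d (a - 1) b)) :
    (a - c) * (a - d) * ∑' n, sTerm c d a b n -
      (a - 1) * (a + b - c - d) * ∑' n, sTerm c d (a - 1) b n = -1 := by
  have hbn (n : ℕ) : b + n ≠ 0 := fun h => hb n (eq_neg_of_add_eq_zero_left h)
  have htelescope : HasSum (fun n => pochQuot c d a b (n + 1) - pochQuot c d a b n)
      ((a - c) * (a - d) * ∑' n, sTerm c d a b n -
        (a - 1) * (a + b - c - d) * ∑' n, sTerm c d (a - 1) b n) := by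
    refine ((h1.hasSum.mul_left _).sub (h2.hasSum.mul_left _)).congr_fun fun n => ?_
    exact (sTerm_contiguous ha1 (poch_ne_zero ha _) (poch_ne_zero hb _)).symm
  have hlim := tendsto_of_hasSum_sub_succ htelescope
  rw [pochQuot_zero] at hlim
  have hzero := eq_zero_of_tendsto_add_natCast_mul (h2.mul_left (a - 1)) <|
    hlim.congr fun n => pochQuot_eq_add_natCast_mul_sTerm_sub_one ha1 (hbn n)
  linear_combination hzero

end Contiguous

theorem stmt5_general (α β γ : ℂ)
    (hα : ∀ k : ℕ, (α + 1) / 2 ≠ -(k : ℂ))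
    (hα' : ∀ k : ℕ, (α - 1) / 2 ≠ -(k : ℂ))
    (hβ : ∀ k : ℕ, (β + 1) / 2 ≠ -(k : ℂ))
    (hS1 : Summable fun n : ℕ => poch (1 / 2) n * poch (γ + 1) n /
      (poch ((α + 1) / 2) (n + 1) * poch ((β + 1) / 2) (n + 1)))
    (hS2 : Summable fun n : ℕ => poch (1 / 2) n * poch (γ + 1) n /
      (poch ((α - 2 + 1) / 2) (n + 1) * poch ((β + 1) / 2) (n + 1))) :
    α * (α - 2 * γ - 1) * (S α β γ / 4) -
      (α - 1) * (α + β - 2 * γ - 1) * (S (α - 2) β γ / 4) + 1 = 0 := by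
  have hshift : (α - 2 + 1) / 2 = (α + 1) / 2 - 1 := by ring
  have ha1 : (α + 1) / 2 ≠ 1 := fun h => hα' 0 (by linear_combination h)
  rw [hshift] at hS2
  have key := tsum_sTerm_contiguous hα ha1 hβ hS1 hS2
  rw [S, S, hshift]
  unfold sTerm at key
  linear_combination key

theorem stmt5 (α β γ : ℂ)
    (hα : ∀ k : ℕ, (α + 1) / 2 ≠ -(k : ℂ))
    (hα' : ∀ k : ℕ, (α - 1) / 2 ≠ -(k : ℂ))
    (hβ : ∀ k : ℕ, (β + 1) / 2 ≠ -(k : ℂ))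
    (hγ : ∀ k : ℕ, γ + 1 ≠ -(k : ℂ))
    (hS1 : Summable fun n : ℕ => poch (1 / 2) n * poch (γ + 1) n /
      (poch ((α + 1) / 2) (n + 1) * poch ((β + 1) / 2) (n + 1)))
    (hS2 : Summable fun n : ℕ => poch (1 / 2) n * poch (γ + 1) n /
      (poch ((α - 2 + 1) / 2) (n + 1) * poch ((β + 1) / 2) (n + 1))) :
    α * (α - 2 * γ - 1) * (S α β γ / 4) -
      (α - 1) * (α + β - 2 * γ - 1) * (S (α - 2) β γ / 4) + 1 = 0 :=
  stmt5_general α β γ hα hα' hβ hS1 hS2
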